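/- Let D be a positive, 1-periodic, C² function, let r ≡ r₀ be a constant function, and let q̃, λ ∈ ℝ. If (k₋, ψ) is a principal eigenpair of L_{1/2−q̃}^λ[r₀;D] and (k₊, φ) is a principal eigenpair of L_{1/2+q̃}^λ[r₀;D], then k₋ = k₊. Consequently, given for every λ > 0 principal eigenpairs of both operators, the spreading speeds coincide: inf_{λ>0} k_{1/2−q̃}^λ[r₀;D]/λ = inf_{λ>0} k_{1/2+q̃}^λ[r₀;D]/λ; in particular the Fickian (q = 0) and Fokker–Planck (q = 1) spreading speeds are equal. -/

import Mathlib

/-!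
Multiplying by `D^q e^{-λx}` conjugates `L_q^λ[r₀;D] - r₀` to `M_a v = D v'' + a D' v'
(`= D^{1-a} (D^a v')'`) with `a = 1 - q`, acting on positive functions with Floquet multiplier
`e^{-λ}`. For `q = 1/2 ∓ q̃` the two exponents satisfy `a + b = 1`, and this duality is the point:
if `M_a v = μ v`, then the flux `z = D^a v'` satisfies `z' = μ D^{a-1} v`, hence `M_b z = μ z`,
with the same multiplier. If `w > 0` solves `M_b w = ν w` with `ν < μ`, the periodic ratio `z / w`
solves an equation with positive zeroth-order coefficient, so it vanishes by the maximum
principle. Then `v` is constant, so `μ = 0`, the multiplier is `1` and `w` is periodic, and the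
minimum of `w` gives `ν ≥ 0`, a contradiction. Hence `μ ≤ ν`, and by symmetry `μ = ν`.
-/

open Real MeasureTheory Set Filter Topology

noncomputable section

/-- The operator `L_q^λ[r;D]` acting on C² functions `ψ`:
`(L_q^λ[r;D]ψ)(x) = D ψ'' + ((1+q)D' − 2λD) ψ' + (qD'' + λ²D − (1+q)λD' + r) ψ`. -/
def Lop (q lam : ℝ) (r D ψ : ℝ → ℝ) (x : ℝ) : ℝ :=
  D x * deriv (deriv ψ) x + ((1 + q) * deriv D x - 2 * lam * D x) * deriv ψ x +
    (q * deriv (deriv D) x + lam ^ 2 * D x - (1 + q) * lam * deriv D x + r x) * ψ x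

/-- `(k, ψ)` is a principal eigenpair of `L_q^λ[r;D]`: `ψ` is a positive, 1-periodic,
C² function with `L_q^λ[r;D]ψ = kψ`. -/
def IsEigenpair (q lam : ℝ) (r D : ℝ → ℝ) (k : ℝ) (ψ : ℝ → ℝ) : Prop :=
  ContDiff ℝ 2 ψ ∧ (∀ x, 0 < ψ x) ∧ Function.Periodic ψ 1 ∧
    ∀ x, Lop q lam r D ψ x = k * ψ x

/-- The Freidlin–Gärtner infimum `inf_{λ>0} k(λ)/λ`, as an extended real number. -/
def speed (k : ℝ → ℝ) : EReal := ⨅ l : {l : ℝ // 0 < l}, ((k l.1 / l.1 : ℝ) : EReal)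

theorem IsLocalMax.deriv_deriv_nonpos {f : ℝ → ℝ} {x : ℝ} (h : IsLocalMax f x)
    (hc : ContinuousAt f x) : deriv (deriv f) x ≤ 0 := by
  by_contra! hpos
  have hconst : f =ᶠ[𝓝 x] fun _ => f x :=
    (h.and (isLocalMin_of_deriv_deriv_pos hpos h.deriv_eq_zero hc)).mono
      fun _ hy => le_antisymm hy.1 hy.2
  have := hconst.deriv.deriv_eq
  simp only [deriv_const'] at this
  linarith

theorem IsLocalMin.deriv_deriv_nonneg {f : ℝ → ℝ} {x : ℝ} (h : IsLocalMin f x)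
    (hc : ContinuousAt f x) : 0 ≤ deriv (deriv f) x := by
  by_contra! hneg
  have hconst : f =ᶠ[𝓝 x] fun _ => f x :=
    (h.and (isLocalMax_of_deriv_deriv_neg hneg h.deriv_eq_zero hc)).mono
      fun _ hy => le_antisymm hy.2 hy.1
  have := hconst.deriv.deriv_eq
  simp only [deriv_const'] at this
  linarith

theorem Function.Periodic.exists_forall_ge {f : ℝ → ℝ} {c : ℝ} (hp : Periodic f c)
    (hc : c ≠ 0) (hf : Continuous f) : ∃ x₀, ∀ x, f x ≤ f x₀ := by
  obtain ⟨_, ⟨x₀, rfl⟩, hx₀⟩ :=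
    (hp.compact_of_continuous hc hf).exists_isGreatest (range_nonempty f)
  exact ⟨x₀, fun x => hx₀ ⟨x, rfl⟩⟩

theorem Function.Periodic.exists_forall_le {f : ℝ → ℝ} {c : ℝ} (hp : Periodic f c)
    (hc : c ≠ 0) (hf : Continuous f) : ∃ x₀, ∀ x, f x₀ ≤ f x := by
  obtain ⟨_, ⟨x₀, rfl⟩, hx₀⟩ :=
    (hp.compact_of_continuous hc hf).exists_isLeast (range_nonempty f)
  exact ⟨x₀, fun x => hx₀ ⟨x, rfl⟩⟩

theorem Function.Periodic.eq_zero_of_ode {R α β γ : ℝ → ℝ} {c : ℝ} (hp : Periodic R c)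
    (hc : c ≠ 0) (hR : Continuous R) (hα : ∀ x, 0 ≤ α x) (hγ : ∀ x, 0 < γ x)
    (heq : ∀ x, α x * deriv (deriv R) x + β x * deriv R x = γ x * R x) (x : ℝ) :
    R x = 0 := by
  obtain ⟨x₀, hx₀⟩ := hp.exists_forall_ge hc hR
  obtain ⟨x₁, hx₁⟩ := hp.exists_forall_le hc hR
  have hmax : IsLocalMax R x₀ := Eventually.of_forall hx₀
  have hmin : IsLocalMin R x₁ := Eventually.of_forall hx₁
  have hR₀ : γ x₀ * R x₀ ≤ 0 := by
    rw [← heq, hmax.deriv_eq_zero, mul_zero, add_zero]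
    exact mul_nonpos_of_nonneg_of_nonpos (hα x₀) (hmax.deriv_deriv_nonpos hR.continuousAt)
  have hR₁ : 0 ≤ γ x₁ * R x₁ := by
    rw [← heq, hmin.deriv_eq_zero, mul_zero, add_zero]
    exact mul_nonneg (hα x₁) (hmin.deriv_deriv_nonneg hR.continuousAt)
  exact le_antisymm ((hx₀ x).trans (nonpos_of_mul_nonpos_right hR₀ (hγ x₀)))
    ((nonneg_of_mul_nonneg_right hR₁ (hγ x₁)).trans (hx₁ x))

theorem Function.Periodic.nonneg_of_ode {w α β : ℝ → ℝ} {c ν : ℝ} (hp : Periodic w c)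
    (hc : c ≠ 0) (hw : Continuous w) (hwpos : ∀ x, 0 < w x) (hα : ∀ x, 0 ≤ α x)
    (heq : ∀ x, α x * deriv (deriv w) x + β x * deriv w x = ν * w x) : 0 ≤ ν := by
  obtain ⟨x₁, hx₁⟩ := hp.exists_forall_le hc hw
  have hmin : IsLocalMin w x₁ := Eventually.of_forall hx₁
  have h : 0 ≤ ν * w x₁ := by
    rw [← heq, hmin.deriv_eq_zero, mul_zero, add_zero]
    exact mul_nonneg (hα x₁) (hmin.deriv_deriv_nonneg hw.continuousAt)
  exact nonneg_of_mul_nonneg_left h (hwpos x₁)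

theorem deriv_add_const_eq_mul {f : ℝ → ℝ} {T c : ℝ} (h : ∀ x, f (x + T) = c * f x) (x : ℝ) :
    deriv f (x + T) = c * deriv f x := by
  rw [← deriv_comp_add_const, show (fun y => f (y + T)) = fun y => c * f y from funext h,
    deriv_const_mul_field]

theorem rpow_eq_rpow_sub_one_mul {x : ℝ} (hx : x ≠ 0) (y : ℝ) : x ^ y = x ^ (y - 1) * x := by
  rw [← Real.rpow_add_one hx, sub_add_cancel]

/-- For positive `D` this is `D^(1-a) (D^a v')'`. -/
def divFormOp (a : ℝ) (D v : ℝ → ℝ) (x : ℝ) : ℝ :=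
  D x * deriv (deriv v) x + a * deriv D x * deriv v x

def flux (a : ℝ) (D v : ℝ → ℝ) (x : ℝ) : ℝ := D x ^ a * deriv v x

section DivFormOp

variable {D : ℝ → ℝ} {a : ℝ}

theorem divFormOp_mul {u w : ℝ → ℝ} (hu : ContDiff ℝ 2 u) (hw : ContDiff ℝ 2 w) (x : ℝ) :
    divFormOp a D (fun y => u y * w y) x =
      w x * divFormOp a D u x + 2 * D x * deriv u x * deriv w x + u x * divFormOp a D w x := by
  have hd : deriv (fun y => u y * w y) = fun y => deriv u y * w y + u y * deriv w y :=
    funext fun y => deriv_mul (hu.differentiable two_ne_zero y) (hw.differentiable two_ne_zero y)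
  have hdd : deriv (fun y => deriv u y * w y + u y * deriv w y) x =
      deriv (deriv u) x * w x + deriv u x * deriv w x +
        (deriv u x * deriv w x + u x * deriv (deriv w) x) :=
    (((hu.differentiable_deriv_two x).hasDerivAt.mul
        (hw.differentiable two_ne_zero x).hasDerivAt).add
      ((hu.differentiable two_ne_zero x).hasDerivAt.mul
        (hw.differentiable_deriv_two x).hasDerivAt)).deriv
  simp only [divFormOp, hd, hdd]
  ring

theorem hasDerivAt_flux {v : ℝ → ℝ} {x : ℝ} (hD : DifferentiableAt ℝ D x) (hDx : D x ≠ 0)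
    (hv : DifferentiableAt ℝ (deriv v) x) :
    HasDerivAt (flux a D v) (D x ^ (a - 1) * divFormOp a D v x) x := by
  show HasDerivAt (fun y => D y ^ a * deriv v y) _ x
  refine ((hD.hasDerivAt.rpow_const (p := a) (Or.inl hDx)).mul hv.hasDerivAt).congr_deriv ?_
  rw [divFormOp, rpow_eq_rpow_sub_one_mul hDx a]
  ring

theorem deriv_flux_of_eq {v : ℝ → ℝ} {μ : ℝ} (hD : Differentiable ℝ D) (hDne : ∀ x, D x ≠ 0)
    (hv : ContDiff ℝ 2 v) (hveq : ∀ x, divFormOp a D v x = μ * v x) :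
    deriv (flux a D v) = fun x => μ * (D x ^ (a - 1) * v x) := by
  funext x
  rw [(hasDerivAt_flux (hD x) (hDne x) (hv.differentiable_deriv_two x)).deriv, hveq]
  ring

theorem contDiff_flux_of_eq {v : ℝ → ℝ} {μ : ℝ} (hD : ContDiff ℝ 1 D) (hDne : ∀ x, D x ≠ 0)
    (hv : ContDiff ℝ 2 v) (hveq : ∀ x, divFormOp a D v x = μ * v x) :
    ContDiff ℝ 2 (flux a D v) := by
  rw [show (2 : WithTop ℕ∞) = 1 + 1 by norm_num, contDiff_succ_iff_deriv,
    deriv_flux_of_eq (hD.differentiable one_ne_zero) hDne hv hveq]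
  refine ⟨fun x => (hasDerivAt_flux (hD.differentiable one_ne_zero x) (hDne x)
    (hv.differentiable_deriv_two x)).differentiableAt, by simp, ?_⟩
  exact contDiff_const.mul ((hD.rpow_const_of_ne hDne).mul (hv.of_le one_le_two))

theorem divFormOp_flux_of_eq {v : ℝ → ℝ} {b μ : ℝ} (hD : Differentiable ℝ D)
    (hDne : ∀ x, D x ≠ 0) (hv : ContDiff ℝ 2 v) (hab : a + b = 1)
    (hveq : ∀ x, divFormOp a D v x = μ * v x) (x : ℝ) :
    divFormOp b D (flux a D v) x = μ * flux a D v x := by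
  have hdd : deriv (fun y => μ * (D y ^ (a - 1) * v y)) x =
      μ * (deriv D x * (a - 1) * D x ^ (a - 1 - 1) * v x + D x ^ (a - 1) * deriv v x) :=
    (((hD x).hasDerivAt.rpow_const (p := a - 1) (Or.inl (hDne x))).mul
      (hv.differentiable two_ne_zero x).hasDerivAt |>.const_mul μ).deriv
  rw [divFormOp, deriv_flux_of_eq hD hDne hv hveq, hdd, flux]
  beta_reduce
  rw [rpow_eq_rpow_sub_one_mul (hDne x) a, rpow_eq_rpow_sub_one_mul (hDne x) (a - 1)]
  linear_combination μ * deriv D x * (D x ^ (a - 1 - 1) * D x) * v x * hab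

theorem flux_add_of_eq_mul {v : ℝ → ℝ} {T c : ℝ} (hDper : Function.Periodic D T)
    (hv : ∀ x, v (x + T) = c * v x) (x : ℝ) : flux a D v (x + T) = c * flux a D v x := by
  rw [flux, flux, hDper, deriv_add_const_eq_mul hv]
  ring

theorem eq_zero_of_divFormOp_eq_of_lt {z w : ℝ → ℝ} {T c μ ν : ℝ} (hT : T ≠ 0)
    (hD : ∀ x, 0 ≤ D x) (hz : ContDiff ℝ 2 z) (hw : ContDiff ℝ 2 w) (hwpos : ∀ x, 0 < w x)
    (hzq : ∀ x, z (x + T) = c * z x) (hwq : ∀ x, w (x + T) = c * w x)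
    (hzeq : ∀ x, divFormOp a D z x = μ * z x) (hweq : ∀ x, divFormOp a D w x = ν * w x)
    (hνμ : ν < μ) (x : ℝ) : z x = 0 := by
  have hc : c ≠ 0 := by
    rintro rfl
    have h := hwpos (0 + T)
    rw [hwq, zero_mul] at h
    exact h.false
  set R : ℝ → ℝ := fun y => z y / w y with hR
  have hzR : (fun y => R y * w y) = z := funext fun y => div_mul_cancel₀ _ (hwpos y).ne'
  have hRper : Function.Periodic R T := fun y => by
    simp only [hR, hzq, hwq, mul_div_mul_left _ _ hc]
  have hRc : ContDiff ℝ 2 R := hz.div hw fun y => (hwpos y).ne'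
  have hReq : ∀ y, D y * w y * deriv (deriv R) y + (2 * D y * deriv w y + a * deriv D y * w y) *
      deriv R y = (μ - ν) * w y * R y := fun y => by
    have h := divFormOp_mul (a := a) (D := D) hRc hw y
    rw [hzR, hzeq, hweq, ← hzR] at h
    simp only [divFormOp] at h
    linear_combination -h
  have hR0 := hRper.eq_zero_of_ode hT hRc.continuous (fun y => mul_nonneg (hD y) (hwpos y).le)
    (fun y => mul_pos (sub_pos.2 hνμ) (hwpos y)) hReq x
  rw [← hzR]
  exact mul_eq_zero_of_left hR0 _

theorem eigenvalue_le_of_divFormOp_eq {v w : ℝ → ℝ} {b T c μ ν : ℝ} (hD : ContDiff ℝ 1 D)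
    (hDpos : ∀ x, 0 < D x) (hDper : Function.Periodic D T) (hT : T ≠ 0) (hab : a + b = 1)
    (hv : ContDiff ℝ 2 v) (hw : ContDiff ℝ 2 w) (hvpos : ∀ x, 0 < v x) (hwpos : ∀ x, 0 < w x)
    (hvq : ∀ x, v (x + T) = c * v x) (hwq : ∀ x, w (x + T) = c * w x)
    (hveq : ∀ x, divFormOp a D v x = μ * v x) (hweq : ∀ x, divFormOp b D w x = ν * w x) :
    μ ≤ ν := by
  by_contra! hνμ
  have hDne : ∀ x, D x ≠ 0 := fun x => (hDpos x).ne'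
  have hflux : ∀ x, flux a D v x = 0 := eq_zero_of_divFormOp_eq_of_lt hT (fun x => (hDpos x).le)
    (contDiff_flux_of_eq hD hDne hv hveq) hw hwpos (flux_add_of_eq_mul hDper hvq) hwq
    (divFormOp_flux_of_eq (hD.differentiable one_ne_zero) hDne hv hab hveq) hweq hνμ
  have hv' : deriv v = 0 := funext fun x =>
    (mul_eq_zero.mp (hflux x)).resolve_left (Real.rpow_pos_of_pos (hDpos x) a).ne'
  have hvconst : ∀ x, v x = v 0 := fun x =>
    is_const_of_deriv_eq_zero (hv.differentiable two_ne_zero) (congrFun hv') x 0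
  have hμ : μ = 0 := by
    have h := hveq 0
    rw [divFormOp, hv', Pi.zero_apply, deriv_zero, Pi.zero_apply] at h
    simpa [(hvpos 0).ne'] using h.symm
  have hc : c = 1 := by
    have h := hvq 0
    rw [hvconst (0 + T)] at h
    simpa [(hvpos 0).ne'] using h
  have hwper : Function.Periodic w T := fun x => by rw [hwq, hc, one_mul]
  have hν := hwper.nonneg_of_ode (α := D) (β := fun x => b * deriv D x) hT hw.continuous hwpos
    (fun x => (hDpos x).le) hweq
  linarith

end DivFormOp

def twist (q lam : ℝ) (D : ℝ → ℝ) (x : ℝ) : ℝ := D x ^ q * exp (-(lam * x))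

section Twist

variable {D : ℝ → ℝ} {q lam : ℝ}

theorem twist_pos (hDpos : ∀ x, 0 < D x) (x : ℝ) : 0 < twist q lam D x :=
  mul_pos (Real.rpow_pos_of_pos (hDpos x) q) (exp_pos _)

theorem twist_add {T : ℝ} (hDper : Function.Periodic D T) (x : ℝ) :
    twist q lam D (x + T) = exp (-(lam * T)) * twist q lam D x := by
  rw [twist, twist, hDper, mul_add, neg_add, exp_add]
  ring

theorem contDiff_twist {n : WithTop ℕ∞} (hD : ContDiff ℝ n D) (hDne : ∀ x, D x ≠ 0) :
    ContDiff ℝ n (twist q lam D) :=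
  (hD.rpow_const_of_ne hDne).mul (contDiff_const.mul contDiff_id).neg.exp

theorem hasDerivAt_twist {x : ℝ} (hD : DifferentiableAt ℝ D x) (hDx : D x ≠ 0) :
    HasDerivAt (twist q lam D) ((q * deriv D x - lam * D x) * twist (q - 1) lam D x) x := by
  have hexp : HasDerivAt (fun y => exp (-(lam * y))) (exp (-(lam * x)) * -lam) x := by
    simpa using ((hasDerivAt_id x).const_mul lam).neg.exp
  refine ((hD.hasDerivAt.rpow_const (p := q) (Or.inl hDx)).mul hexp).congr_deriv ?_
  rw [twist, rpow_eq_rpow_sub_one_mul hDx q]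
  ring

theorem divFormOp_twist (hD : ContDiff ℝ 2 D) (hDne : ∀ x, D x ≠ 0) (x : ℝ) :
    divFormOp (1 - q) D (twist q lam D) x =
      (q * deriv (deriv D) x + lam ^ 2 * D x - (1 + q) * lam * deriv D x) * twist q lam D x := by
  have hD₁ : Differentiable ℝ D := hD.differentiable two_ne_zero
  have hd : deriv (twist q lam D) =
      fun y => (q * deriv D y - lam * D y) * twist (q - 1) lam D y :=
    funext fun y => (hasDerivAt_twist (hD₁ y) (hDne y)).deriv
  have hdd : deriv (fun y => (q * deriv D y - lam * D y) * twist (q - 1) lam D y) x = _ :=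
    ((((hD.differentiable_deriv_two x).hasDerivAt.const_mul q).sub
      ((hD₁ x).hasDerivAt.const_mul lam)).mul (hasDerivAt_twist (q := q - 1) (lam := lam) (hD₁ x)
        (hDne x))).deriv
  rw [divFormOp, hd, hdd]
  simp only [Pi.sub_apply]
  rw [twist, twist, twist, rpow_eq_rpow_sub_one_mul (hDne x) q,
    rpow_eq_rpow_sub_one_mul (hDne x) (q - 1)]
  ring

theorem divFormOp_twist_mul {ψ : ℝ → ℝ} (hD : ContDiff ℝ 2 D) (hDne : ∀ x, D x ≠ 0)
    (hψ : ContDiff ℝ 2 ψ) (r : ℝ → ℝ) (x : ℝ) :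
    divFormOp (1 - q) D (fun y => twist q lam D y * ψ y) x =
      twist q lam D x * (Lop q lam r D ψ x - r x * ψ x) := by
  rw [divFormOp_mul (contDiff_twist hD hDne) hψ, divFormOp_twist hD hDne,
    (hasDerivAt_twist (hD.differentiable two_ne_zero x) (hDne x)).deriv, divFormOp, Lop, twist,
    twist, rpow_eq_rpow_sub_one_mul (hDne x) q]
  ring

end Twist

theorem IsEigenpair.exists_divFormOp_eq {D ψ : ℝ → ℝ} {q lam r₀ k : ℝ}
    (h : IsEigenpair q lam (fun _ => r₀) D k ψ) (hD : ContDiff ℝ 2 D) (hDpos : ∀ x, 0 < D x)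
    (hDper : Function.Periodic D 1) :
    ∃ v : ℝ → ℝ, ContDiff ℝ 2 v ∧ (∀ x, 0 < v x) ∧ (∀ x, v (x + 1) = exp (-lam) * v x) ∧
      ∀ x, divFormOp (1 - q) D v x = (k - r₀) * v x := by
  obtain ⟨hψ, hψpos, hψper, hψeq⟩ := h
  have hDne : ∀ x, D x ≠ 0 := fun x => (hDpos x).ne'
  refine ⟨fun y => twist q lam D y * ψ y, (contDiff_twist hD hDne).mul hψ,
    fun x => mul_pos (twist_pos hDpos x) (hψpos x), fun x => ?_, fun x => ?_⟩
  · beta_reduce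
    rw [twist_add hDper, hψper, mul_one]
    ring
  · rw [divFormOp_twist_mul hD hDne hψ, hψeq]
    ring

/-- Theorem `r_constant (i)`. For constant growth rate `r₀`, the
principal eigenvalues of `L_{1/2−q̃}^λ` and `L_{1/2+q̃}^λ` coincide for every `λ`, and
hence the corresponding spreading speeds coincide. -/
theorem stmt_7 (D : ℝ → ℝ) (hD : ContDiff ℝ 2 D) (hDpos : ∀ x, 0 < D x)
    (hDper : Function.Periodic D 1) (r₀ qt : ℝ)
    (km kp : ℝ → ℝ) (ψ φ : ℝ → ℝ → ℝ)
    (hm : ∀ lam : ℝ, IsEigenpair (1 / 2 - qt) lam (fun _ => r₀) D (km lam) (ψ lam))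
    (hp : ∀ lam : ℝ, IsEigenpair (1 / 2 + qt) lam (fun _ => r₀) D (kp lam) (φ lam)) :
    (∀ lam : ℝ, km lam = kp lam) ∧ speed km = speed kp := by
  have hk : ∀ lam, km lam = kp lam := by
    intro lam
    obtain ⟨v, hv, hvpos, hvq, hveq⟩ := (hm lam).exists_divFormOp_eq hD hDpos hDper
    obtain ⟨w, hw, hwpos, hwq, hweq⟩ := (hp lam).exists_divFormOp_eq hD hDpos hDper
    have hD₁ : ContDiff ℝ 1 D := hD.of_le one_le_two
    have h₁ := eigenvalue_le_of_divFormOp_eq hD₁ hDpos hDper one_ne_zero (by ring)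
      hv hw hvpos hwpos hvq hwq hveq hweq
    have h₂ := eigenvalue_le_of_divFormOp_eq hD₁ hDpos hDper one_ne_zero (by ring)
      hw hv hwpos hvpos hwq hvq hweq hveq
    linarith
  exact ⟨hk, by rw [funext hk]⟩
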